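/- Let E: S(A) → S(B) and D: S(B) → S(A) be quantum channels where dim(A) = M and dim(B) = R. Then the average recovery fidelity over Haar-random pure states satisfies ∫ Tr((D∘E)(|ϑ⟩⟨ϑ|) · |ϑ⟩⟨ϑ|) dϑ ≤ (RM + R)/(M(M+1)) ≤ R/M. -/

import Mathlib

open Matrix ComplexOrder

/-- The positive semidefinite square root of a matrix (junk value `0` off
positive semidefinite matrices). -/
noncomputable def msqrt {n : Type*} [Fintype n] [DecidableEq n] (A : Matrix n n ℂ) :
    Matrix n n ℂ :=
  letI := Classical.propDecidable
  if h : A.PosSemidef then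
    (h.1.eigenvectorUnitary : Matrix n n ℂ) *
      diagonal ((↑) ∘ (fun i => (h.1.eigenvalues i).sqrt)) *
      (star h.1.eigenvectorUnitary : Matrix n n ℂ)
  else 0

/-- The trace norm `‖X‖₁ = Tr √(XᴴX)`. -/
noncomputable def traceNorm {n : Type*} [Fintype n] [DecidableEq n] (X : Matrix n n ℂ) : ℝ :=
  (msqrt (Xᴴ * X)).trace.re

/-- The (squared) fidelity `F(ρ,σ) = ‖√ρ √σ‖₁²`. -/
noncomputable def fidelity {n : Type*} [Fintype n] [DecidableEq n] (ρ σ : Matrix n n ℂ) : ℝ :=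
  traceNorm (msqrt ρ * msqrt σ) ^ 2

/-- The trace distance `td(ρ,σ) = ‖ρ - σ‖₁ / 2`. -/
noncomputable def traceDist {n : Type*} [Fintype n] [DecidableEq n] (ρ σ : Matrix n n ℂ) : ℝ :=
  traceNorm (ρ - σ) / 2

/-- The outer product `|u⟩⟨v|`. -/
noncomputable def outer {n : Type*} (u v : n → ℂ) : Matrix n n ℂ :=
  Matrix.of fun i j => u i * (starRingEnd ℂ) (v j)

/-- Partial trace over the first tensor factor. -/
noncomputable def ptrFst {α β : Type*} [Fintype α] (M : Matrix (α × β) (α × β) ℂ) : Matrix β β ℂ :=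
  Matrix.of fun b b' => ∑ a, M (a, b) (a, b')

/-- Partial trace over the second tensor factor. -/
noncomputable def ptrSnd {α β : Type*} [Fintype β] (M : Matrix (α × β) (α × β) ℂ) : Matrix α α ℂ :=
  Matrix.of fun a a' => ∑ b, M (a, b) (a', b)

/-- A map on matrices is a quantum channel (CPTP) iff it admits a finite Kraus
representation `E(ρ) = Σᵢ Kᵢ ρ Kᵢᴴ` with `Σᵢ Kᵢᴴ Kᵢ = 1`. -/
def IsCPTP {α β : Type*} [Fintype α] [Fintype β] [DecidableEq α] [DecidableEq β]
    (E : Matrix α α ℂ → Matrix β β ℂ) : Prop :=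
  ∃ (m : ℕ) (K : Fin m → Matrix β α ℂ),
    (∀ ρ, E ρ = ∑ i, K i * ρ * (K i)ᴴ) ∧ ∑ i, (K i)ᴴ * K i = 1

/-! Write `Φ = Dec ∘ Enc` with the Kraus operators `Aₜ = Lⱼ Kᵢ`. For the swap `S` one has
`Tr(Φ(ρ) ρ) = Tr(S (∑ₜ Aₜ ⊗ Aₜᴴ) (ρ ⊗ ρ))`, so the second moment `(1 + S)/(M(M+1))` turns the
average fidelity into `(M + ∑ₜ |Tr Aₜ|²)/(M(M+1))`. By Cauchy–Schwarz, `∑ₜ |Tr(Lⱼ Kᵢ)|²` is at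
most `RM` (Frobenius norms of the `Lⱼ` and the `Kᵢ`) and, cycling the trace to `Tr(Kᵢ Lⱼ)`, at
most `R²` (the `Kᵢ Lⱼ` are Kraus operators of `Enc ∘ Dec` on the `R`-dimensional space). The
first bound serves when `M ≤ R`, the second when `R ≤ M`. -/

open MeasureTheory Kronecker

section Kraus

variable {α β γ ι κ : Type*} [Fintype β] [Fintype ι] [Fintype κ]

noncomputable def krausMap [Fintype α] (K : ι → Matrix β α ℂ) (ρ : Matrix α α ℂ) : Matrix β β ℂ :=
  ∑ i, K i * ρ * (K i)ᴴ

theorem krausMap_krausMap [Fintype α] (K : ι → Matrix β α ℂ) (L : κ → Matrix γ β ℂ)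
    (ρ : Matrix α α ℂ) :
    krausMap L (krausMap K ρ) = krausMap (fun t : ι × κ => L t.2 * K t.1) ρ := by
  simp only [krausMap, Matrix.mul_sum, Matrix.sum_mul, conjTranspose_mul, Matrix.mul_assoc]
  rw [Finset.sum_comm, Fintype.sum_prod_type]

theorem sum_conjTranspose_mul_self_comp [Fintype γ] [DecidableEq α] [DecidableEq β]
    {K : ι → Matrix β α ℂ} {L : κ → Matrix γ β ℂ}
    (hK : ∑ i, (K i)ᴴ * K i = 1) (hL : ∑ j, (L j)ᴴ * L j = 1) :
    ∑ t : ι × κ, (L t.2 * K t.1)ᴴ * (L t.2 * K t.1) = 1 := by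
  have h : ∀ i, ∑ j, (L j * K i)ᴴ * (L j * K i) = (K i)ᴴ * K i := fun i => by
    simp only [conjTranspose_mul, Matrix.mul_assoc, ← Matrix.mul_sum]
    simp only [← Matrix.mul_assoc, ← Matrix.sum_mul, hL, Matrix.mul_one]
  simp only [Fintype.sum_prod_type, h, hK]

end Kraus

section Frobenius

variable {ι m n : Type*} [Fintype ι] [Fintype m] [Fintype n]

noncomputable def frobeniusSq (X : Matrix m n ℂ) : ℝ :=
  ∑ i, ∑ j, ‖X i j‖ ^ 2

theorem ofReal_frobeniusSq (X : Matrix m n ℂ) : (frobeniusSq X : ℂ) = (Xᴴ * X).trace := by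
  simp only [frobeniusSq, Matrix.trace, Matrix.diag_apply, Matrix.mul_apply,
    conjTranspose_apply, Complex.ofReal_sum, Complex.ofReal_pow, ← Complex.conj_mul',
    Complex.star_def]
  exact Finset.sum_comm

theorem sum_frobeniusSq_eq_card [DecidableEq n] {K : ι → Matrix m n ℂ}
    (hK : ∑ i, (K i)ᴴ * K i = 1) : ∑ i, frobeniusSq (K i) = Fintype.card n := by
  have h := congrArg Matrix.trace hK
  rw [Matrix.trace_sum, Matrix.trace_one] at h
  exact_mod_cast (by simpa only [← ofReal_frobeniusSq, ← Complex.ofReal_sum] using h :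
    ((∑ i, frobeniusSq (K i) : ℝ) : ℂ) = Fintype.card n)

theorem frobeniusSq_one [DecidableEq n] : frobeniusSq (1 : Matrix n n ℂ) = Fintype.card n := by
  simpa using sum_frobeniusSq_eq_card (K := fun _ : Unit => (1 : Matrix n n ℂ)) (by simp)

theorem norm_sum_mul_sq_le (u v : ι → ℂ) :
    ‖∑ i, u i * v i‖ ^ 2 ≤ (∑ i, ‖u i‖ ^ 2) * ∑ i, ‖v i‖ ^ 2 :=
  calc ‖∑ i, u i * v i‖ ^ 2 ≤ (∑ i, ‖u i‖ * ‖v i‖) ^ 2 := by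
        gcongr; exact (norm_sum_le _ _).trans_eq (by simp_rw [norm_mul])
    _ ≤ (∑ i, ‖u i‖ ^ 2) * ∑ i, ‖v i‖ ^ 2 := Finset.sum_mul_sq_le_sq_mul_sq _ _ _

theorem norm_trace_mul_sq_le (X : Matrix m n ℂ) (Y : Matrix n m ℂ) :
    ‖(X * Y).trace‖ ^ 2 ≤ frobeniusSq X * frobeniusSq Y := by
  have h := norm_sum_mul_sq_le (fun p : m × n => X p.1 p.2) (fun p => Y p.2 p.1)
  simp only [Fintype.sum_prod_type] at h
  rwa [frobeniusSq, frobeniusSq, Finset.sum_comm (f := fun i j => ‖Y i j‖ ^ 2)]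

theorem norm_trace_sq_le [DecidableEq n] (X : Matrix n n ℂ) :
    ‖X.trace‖ ^ 2 ≤ Fintype.card n * frobeniusSq X := by
  simpa [frobeniusSq_one] using norm_trace_mul_sq_le 1 X

end Frobenius

section Swap

def swapMatrix {R : Type*} [Zero R] [One R] (n : Type*) [DecidableEq n] :
    Matrix (n × n) (n × n) R :=
  Matrix.of fun p q => if p.1 = q.2 ∧ p.2 = q.1 then 1 else 0

variable {R n : Type*} [DecidableEq n]

theorem swapMatrix_apply [Zero R] [One R] (p q : n × n) :
    (swapMatrix n : Matrix (n × n) (n × n) R) p q = if p.swap = q then 1 else 0 := by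
  simp only [swapMatrix, of_apply, Prod.ext_iff, Prod.fst_swap, Prod.snd_swap, and_comm]

theorem swapMatrix_mul [Semiring R] [Fintype n] (B : Matrix (n × n) (n × n) R) :
    swapMatrix n * B = B.submatrix Prod.swap id := by
  ext p q
  simp [Matrix.mul_apply, swapMatrix_apply]

theorem swapMatrix_mul_swapMatrix [Semiring R] [Fintype n] :
    (swapMatrix n * swapMatrix n : Matrix (n × n) (n × n) R) = 1 := by
  ext p q
  simp [swapMatrix_mul, swapMatrix_apply, Matrix.one_apply]

theorem trace_swapMatrix_mul_kronecker [CommSemiring R] [Fintype n] (X Y : Matrix n n R) :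
    (swapMatrix n * (X ⊗ₖ Y)).trace = (X * Y).trace := by
  simp only [swapMatrix_mul, Matrix.trace, Matrix.diag_apply, submatrix_apply,
    Fintype.sum_prod_type, Matrix.mul_apply, id]
  exact Finset.sum_comm

end Swap

section Integral

variable {X n : Type*} [MeasurableSpace X] {μ : Measure X} [Fintype n]

theorem integrable_trace_mul {F : X → Matrix n n ℂ} (hF : ∀ p q, Integrable (fun x => F x p q) μ)
    (B : Matrix n n ℂ) : Integrable (fun x => (B * F x).trace) μ := by
  simp only [Matrix.trace, Matrix.diag_apply, Matrix.mul_apply]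
  exact integrable_finsetSum _ fun p _ => integrable_finsetSum _ fun q _ => (hF q p).const_mul _

theorem integral_trace_mul {F : X → Matrix n n ℂ} (hF : ∀ p q, Integrable (fun x => F x p q) μ)
    (B : Matrix n n ℂ) :
    ∫ x, (B * F x).trace ∂μ = (B * Matrix.of fun p q => ∫ x, F x p q ∂μ).trace := by
  calc ∫ x, (B * F x).trace ∂μ = ∑ p, ∫ x, ∑ q, B p q * F x q p ∂μ :=
        integral_finsetSum _ fun p _ => integrable_finsetSum _ fun q _ => (hF q p).const_mul _
    _ = ∑ p, ∑ q, B p q * ∫ x, F x q p ∂μ := Finset.sum_congr rfl fun p _ =>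
        (integral_finsetSum _ fun q _ => (hF q p).const_mul _).trans
          (Finset.sum_congr rfl fun q _ => integral_const_mul _ _)
    _ = (B * Matrix.of fun p q => ∫ x, F x p q ∂μ).trace := rfl

end Integral

section PureStates

variable {n : Type*} [Fintype n] {μ : Measure (n → ℂ)}

theorem integrable_kronecker_outer_apply [IsFiniteMeasure μ]
    (hunit : ∀ᵐ ϑ ∂μ, ∑ x, ‖ϑ x‖ ^ 2 = 1) (p q : n × n) :
    Integrable (fun ϑ => (outer ϑ ϑ ⊗ₖ outer ϑ ϑ) p q) μ := by
  refine (integrable_const (1 : ℝ)).mono' ?_ ?_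
  · refine Continuous.aestronglyMeasurable ?_
    simp only [outer, kroneckerMap_apply, of_apply]
    fun_prop
  · filter_upwards [hunit] with ϑ hϑ
    have hle : ∀ x, ‖ϑ x‖ ≤ 1 := fun x => by
      refine (sq_le_one_iff₀ (norm_nonneg _)).1 (hϑ ▸ ?_)
      exact Finset.single_le_sum (fun i _ => sq_nonneg ‖ϑ i‖) (Finset.mem_univ x)
    simp only [outer, kroneckerMap_apply, of_apply, norm_mul, Complex.norm_conj]
    exact mul_le_one₀ (mul_le_one₀ (hle _) (norm_nonneg _) (hle _)) (by positivity)
      (mul_le_one₀ (hle _) (norm_nonneg _) (hle _))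

variable [DecidableEq n]

theorem integral_trace_swapMatrix_mul_mul_kronecker_outer [IsFiniteMeasure μ]
    (hunit : ∀ᵐ ϑ ∂μ, ∑ x, ‖ϑ x‖ ^ 2 = 1) {c : ℂ}
    (hmom : ∀ p q, ∫ ϑ, (outer ϑ ϑ ⊗ₖ outer ϑ ϑ) p q ∂μ =
      (c • (1 + swapMatrix n) : Matrix (n × n) (n × n) ℂ) p q)
    (T : Matrix (n × n) (n × n) ℂ) :
    ∫ ϑ, (swapMatrix n * T * (outer ϑ ϑ ⊗ₖ outer ϑ ϑ)).trace ∂μ =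
      c * ((swapMatrix n * T).trace + T.trace) := by
  have hmoment : (Matrix.of fun p q => ∫ ϑ, (outer ϑ ϑ ⊗ₖ outer ϑ ϑ) p q ∂μ) =
      c • (1 + swapMatrix n) := Matrix.ext hmom
  rw [integral_trace_mul (integrable_kronecker_outer_apply hunit), hmoment, Matrix.mul_smul,
    trace_smul, Matrix.mul_add, Matrix.mul_one, trace_add, smul_eq_mul,
    trace_mul_comm (swapMatrix n * T), ← Matrix.mul_assoc, swapMatrix_mul_swapMatrix,
    Matrix.one_mul]

theorem trace_krausMap_mul {ι : Type*} [Fintype ι] (A : ι → Matrix n n ℂ) (ρ : Matrix n n ℂ) :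
    (krausMap A ρ * ρ).trace =
      (swapMatrix n * (∑ i, A i ⊗ₖ (A i)ᴴ) * (ρ ⊗ₖ ρ)).trace := by
  simp only [krausMap, Matrix.sum_mul, Matrix.mul_sum, trace_sum]
  refine Finset.sum_congr rfl fun i _ => ?_
  rw [Matrix.mul_assoc (swapMatrix n), ← mul_kronecker_mul, trace_swapMatrix_mul_kronecker]
  simp only [Matrix.mul_assoc]

theorem integral_re_trace_krausMap_outer_mul_outer [IsFiniteMeasure μ] {ι : Type*} [Fintype ι]
    {A : ι → Matrix n n ℂ} (hA : ∑ i, (A i)ᴴ * A i = 1)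
    (hunit : ∀ᵐ ϑ ∂μ, ∑ x, ‖ϑ x‖ ^ 2 = 1) {c : ℝ}
    (hmom : ∀ p q, ∫ ϑ, (outer ϑ ϑ ⊗ₖ outer ϑ ϑ) p q ∂μ =
      ((c : ℂ) • (1 + swapMatrix n) : Matrix (n × n) (n × n) ℂ) p q) :
    ∫ ϑ, (krausMap A (outer ϑ ϑ) * outer ϑ ϑ).trace.re ∂μ =
      c * (Fintype.card n + ∑ i, ‖(A i).trace‖ ^ 2) := by
  have hswap : (swapMatrix n * ∑ i, A i ⊗ₖ (A i)ᴴ).trace = (Fintype.card n : ℂ) := by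
    simp only [Matrix.mul_sum, trace_sum, trace_swapMatrix_mul_kronecker]
    simp only [trace_mul_comm (A _), ← trace_sum, hA, trace_one]
  have hkron : (∑ i, A i ⊗ₖ (A i)ᴴ).trace = ((∑ i, ‖(A i).trace‖ ^ 2 : ℝ) : ℂ) := by
    simp only [trace_sum, trace_kronecker, trace_conjTranspose, Complex.ofReal_sum,
      Complex.ofReal_pow, ← Complex.mul_conj', Complex.star_def]
  simp_rw [trace_krausMap_mul]
  refine (integral_re (integrable_trace_mul (integrable_kronecker_outer_apply hunit) _)).trans ?_
  rw [integral_trace_swapMatrix_mul_mul_kronecker_outer hunit hmom, hswap, hkron]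
  norm_cast

end PureStates

section TraceBounds

variable {α β ι κ : Type*} [Fintype α] [Fintype β] [Fintype ι] [Fintype κ]
  [DecidableEq α] [DecidableEq β] {K : ι → Matrix β α ℂ} {L : κ → Matrix α β ℂ}

theorem sum_norm_trace_mul_sq_le_card_mul_card (hK : ∑ i, (K i)ᴴ * K i = 1)
    (hL : ∑ j, (L j)ᴴ * L j = 1) :
    ∑ t : ι × κ, ‖(L t.2 * K t.1).trace‖ ^ 2 ≤ Fintype.card β * Fintype.card α :=
  calc ∑ t : ι × κ, ‖(L t.2 * K t.1).trace‖ ^ 2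
      ≤ ∑ t : ι × κ, frobeniusSq (L t.2) * frobeniusSq (K t.1) :=
        Finset.sum_le_sum fun t _ => norm_trace_mul_sq_le _ _
    _ = (∑ j, frobeniusSq (L j)) * ∑ i, frobeniusSq (K i) := by
        rw [Finset.sum_mul_sum, Fintype.sum_prod_type, Finset.sum_comm]
    _ = Fintype.card β * Fintype.card α := by
        rw [sum_frobeniusSq_eq_card hL, sum_frobeniusSq_eq_card hK]

theorem sum_norm_trace_mul_sq_le_card_sq (hK : ∑ i, (K i)ᴴ * K i = 1)
    (hL : ∑ j, (L j)ᴴ * L j = 1) :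
    ∑ t : ι × κ, ‖(L t.2 * K t.1).trace‖ ^ 2 ≤ Fintype.card β * Fintype.card β :=
  calc ∑ t : ι × κ, ‖(L t.2 * K t.1).trace‖ ^ 2
      = ∑ t : κ × ι, ‖(K t.2 * L t.1).trace‖ ^ 2 := by
        rw [← (Equiv.prodComm κ ι).sum_comp]
        simp only [Equiv.prodComm_apply, Prod.fst_swap, Prod.snd_swap, trace_mul_comm (L _)]
    _ ≤ ∑ t : κ × ι, Fintype.card β * frobeniusSq (K t.2 * L t.1) :=
        Finset.sum_le_sum fun t _ => norm_trace_sq_le _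
    _ = Fintype.card β * Fintype.card β := by
        rw [← Finset.mul_sum, sum_frobeniusSq_eq_card (sum_conjTranspose_mul_self_comp hL hK)]

end TraceBounds

open MeasureTheory Kronecker in
theorem haar_average_recovery_bound_general (M R : ℕ) (hR : 0 < R)
    (Enc : Matrix (Fin M) (Fin M) ℂ → Matrix (Fin R) (Fin R) ℂ)
    (Dec : Matrix (Fin R) (Fin R) ℂ → Matrix (Fin M) (Fin M) ℂ)
    (hEnc : IsCPTP Enc) (hDec : IsCPTP Dec)
    (μ : Measure (Fin M → ℂ)) [IsProbabilityMeasure μ]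
    (hunit : ∀ᵐ ϑ ∂μ, ∑ x, ‖ϑ x‖ ^ 2 = 1)
    (hmom : ∀ p q : Fin M × Fin M,
      (∫ ϑ, ((outer ϑ ϑ) ⊗ₖ (outer ϑ ϑ)) p q ∂μ) =
        ((((M : ℂ) * ((M : ℂ) + 1))⁻¹ •
          ((1 : Matrix (Fin M × Fin M) (Fin M × Fin M) ℂ) +
            Matrix.of (fun p q : Fin M × Fin M =>
              if p.1 = q.2 ∧ p.2 = q.1 then (1 : ℂ) else 0))) p q)) :
    (∫ ϑ, ((Dec (Enc (outer ϑ ϑ)) * outer ϑ ϑ).trace).re ∂μ) ≤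
        ((R : ℝ) * M + R) / (M * (M + 1)) ∧
      ((R : ℝ) * M + R) / (M * (M + 1)) ≤ (R : ℝ) / M := by
  obtain ⟨mE, K, hEnc, hK⟩ := hEnc
  obtain ⟨mD, L, hDec, hL⟩ := hDec
  have hchannel : ∀ ρ, Dec (Enc ρ) = krausMap (fun t : Fin mE × Fin mD => L t.2 * K t.1) ρ :=
    fun ρ => by rw [← krausMap_krausMap, hDec, hEnc]; rfl
  have hc : ((((M : ℝ) * (M + 1))⁻¹ : ℝ) : ℂ) = ((M : ℂ) * ((M : ℂ) + 1))⁻¹ := by push_cast; rfl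
  have hfidelity := integral_re_trace_krausMap_outer_mul_outer (c := ((M : ℝ) * (M + 1))⁻¹)
    (sum_conjTranspose_mul_self_comp hK hL) hunit fun p q => by rw [hc]; exact hmom p q
  have hRM := sum_norm_trace_mul_sq_le_card_mul_card hK hL
  have hRR := sum_norm_trace_mul_sq_le_card_sq hK hL
  simp only [Fintype.card_fin] at hfidelity hRM hRR
  have hR1 : (1 : ℝ) ≤ R := by exact_mod_cast hR
  have hnum : (M : ℝ) + ∑ t : Fin mE × Fin mD, ‖(L t.2 * K t.1).trace‖ ^ 2 ≤ R * M + R := by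
    rcases le_total (R : ℝ) M with h | h
    · nlinarith [mul_nonneg (sub_nonneg.2 hR1) (sub_nonneg.2 h)]
    · linarith
  simp_rw [hchannel, hfidelity]
  constructor
  · rw [div_eq_inv_mul]
    gcongr
  · rw [show (R : ℝ) * M + R = R * (M + 1) by ring, mul_div_mul_right _ _ (by positivity)]

open MeasureTheory Kronecker in
/-- Average recovery fidelity bound.  Let `Enc : S(A) → S(B)` and
`Dec : S(B) → S(A)` be quantum channels with `dim A = M`, `dim B = R`, and let
`μ` be the Haar measure on pure states of `A` (characterized by being supported
on unit vectors with second moment `∫ |ϑ⟩⟨ϑ|^{⊗2} dμ = (id + S)/(M(M+1))`, `S`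
the swap).  Then
`∫ Tr((Dec∘Enc)(|ϑ⟩⟨ϑ|)·|ϑ⟩⟨ϑ|) dμ ≤ (RM + R)/(M(M+1)) ≤ R/M`. -/
theorem haar_average_recovery_bound (M R : ℕ) (hM : 0 < M) (hR : 0 < R)
    (Enc : Matrix (Fin M) (Fin M) ℂ → Matrix (Fin R) (Fin R) ℂ)
    (Dec : Matrix (Fin R) (Fin R) ℂ → Matrix (Fin M) (Fin M) ℂ)
    (hEnc : IsCPTP Enc) (hDec : IsCPTP Dec)
    (μ : Measure (Fin M → ℂ)) [IsProbabilityMeasure μ]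
    (hunit : ∀ᵐ ϑ ∂μ, ∑ x, ‖ϑ x‖ ^ 2 = 1)
    (hmom : ∀ p q : Fin M × Fin M,
      (∫ ϑ, ((outer ϑ ϑ) ⊗ₖ (outer ϑ ϑ)) p q ∂μ) =
        ((((M : ℂ) * ((M : ℂ) + 1))⁻¹ •
          ((1 : Matrix (Fin M × Fin M) (Fin M × Fin M) ℂ) +
            Matrix.of (fun p q : Fin M × Fin M =>
              if p.1 = q.2 ∧ p.2 = q.1 then (1 : ℂ) else 0))) p q)) :
    (∫ ϑ, ((Dec (Enc (outer ϑ ϑ)) * outer ϑ ϑ).trace).re ∂μ) ≤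
        ((R : ℝ) * M + R) / (M * (M + 1)) ∧
      ((R : ℝ) * M + R) / (M * (M + 1)) ≤ (R : ℝ) / M :=
  haar_average_recovery_bound_general M R hR Enc Dec hEnc hDec μ hunit hmom
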